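/- arXiv:1804.05932 — 5 statements merged into one kernel-verified Lean document; each statement's English description precedes it below -/
import Mathlib

section
/- Let V be a finite set of nodes, X ⊆ V × V a set of directed live edges, S ⊆ V a seed set, and α, β positive integers. Then the defender win indicator ρ^X_S is submodular as a function of the monitor set: for all monitor sets A ⊆ B ⊆ V and every node v ∈ V, ρ^X_S(A ∪ {v}) − ρ^X_S(A) ≥ ρ^X_S(B ∪ {v}) − ρ^X_S(B). -/
open scoped Classical

/-- The infected sets of the live-edge diffusion process:
`I_S(0) = S` and `I_S(t+1) = I_S(t) ∪ {w : ∃ v ∈ I_S(t), (v,w) ∈ X}`. -/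
noncomputable def infect {V : Type*} [Fintype V] [DecidableEq V]
    (X : Finset (V × V)) (S : Finset V) : ℕ → Finset V
  | 0 => S
  | t + 1 => infect X S t ∪
      Finset.univ.filter (fun w => ∃ v ∈ infect X S t, (v, w) ∈ X)

/-- The set of nodes reachable from `S` via live edges of `X`. -/
noncomputable def reachSet {V : Type*} [Fintype V] [DecidableEq V]
    (X : Finset (V × V)) (S : Finset V) : Finset V :=
  Finset.univ.filter (fun u => ∃ t, u ∈ infect X S t)

/-- The monitor set `M` detects the outbreak before `β`: there exists `t` with
`M ∩ I_S(t) ≠ ∅` and `|I_S(t)| ≤ β`. -/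
def detects {V : Type*} [Fintype V] [DecidableEq V]
    (X : Finset (V × V)) (S : Finset V) (β : ℕ) (M : Finset V) : Prop :=
  ∃ t, (M ∩ infect X S t).Nonempty ∧ (infect X S t).card ≤ β

/-- The defender win indicator `ρ^X_S(M)`: equal to `1` if either the set of
nodes reachable from `S` via live edges of `X` has size less than `α`, or `M`
detects the outbreak before `β`; and `0` otherwise. -/
noncomputable def rho {V : Type*} [Fintype V] [DecidableEq V]
    (X : Finset (V × V)) (S : Finset V) (α β : ℕ) (M : Finset V) : ℝ :=
  if (reachSet X S).card < α ∨ detects X S β M then 1 else 0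

lemma detects_mono {V : Type*} [Fintype V] [DecidableEq V]
    (X : Finset (V × V)) (S : Finset V) (β : ℕ) {A B : Finset V} (h : A ⊆ B)
    (hA : detects X S β A) : detects X S β B := by
  obtain ⟨t, ⟨x, hx⟩, hc⟩ := hA
  exact ⟨t, ⟨x, Finset.mem_inter.2 ⟨h (Finset.mem_inter.1 hx).1, (Finset.mem_inter.1 hx).2⟩⟩, hc⟩

lemma detects_insert {V : Type*} [Fintype V] [DecidableEq V]
    (X : Finset (V × V)) (S : Finset V) (β : ℕ) (M : Finset V) (v : V) :
    detects X S β (insert v M) ↔ detects X S β M ∨ detects X S β {v} := by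
  constructor
  · rintro ⟨t, ⟨x, hx⟩, hc⟩
    rw [Finset.mem_inter, Finset.mem_insert] at hx
    rcases hx.1 with rfl | hxM
    · exact Or.inr ⟨t, ⟨x, Finset.mem_inter.2 ⟨Finset.mem_singleton_self x, hx.2⟩⟩, hc⟩
    · exact Or.inl ⟨t, ⟨x, Finset.mem_inter.2 ⟨hxM, hx.2⟩⟩, hc⟩
  · rintro (h | h)
    · exact detects_mono X S β (Finset.subset_insert v M) h
    · exact detects_mono X S β (by simp) h

/-- The defender win indicator is submodular in the monitor set. -/
theorem stmt2 {V : Type*} [Fintype V] [DecidableEq V]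
    (X : Finset (V × V)) (S : Finset V) (α β : ℕ) (hα : 0 < α) (hβ : 0 < β)
    (A B : Finset V) (hAB : A ⊆ B) (v : V) :
    rho X S α β (insert v A) - rho X S α β A ≥
      rho X S α β (insert v B) - rho X S α β B := by
  unfold rho
  by_cases hP : (reachSet X S).card < α
  · simp [hP]
  by_cases hv : detects X S β {v}
  · rw [if_pos (Or.inr ((detects_insert X S β A v).2 (Or.inr hv))),
      if_pos (Or.inr ((detects_insert X S β B v).2 (Or.inr hv)))]
    by_cases hA : detects X S β A
    · rw [if_pos (Or.inr hA), if_pos (Or.inr (detects_mono X S β hAB hA))]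
    · rw [if_neg (by tauto)]
      by_cases hB : detects X S β B
      · rw [if_pos (Or.inr hB)]; norm_num
      · rw [if_neg (by tauto)]
  · have hA : (reachSet X S).card < α ∨ detects X S β (insert v A) ↔
        (reachSet X S).card < α ∨ detects X S β A := by
      rw [detects_insert]; tauto
    have hB : (reachSet X S).card < α ∨ detects X S β (insert v B) ↔
        (reachSet X S).card < α ∨ detects X S β B := by
      rw [detects_insert]; tauto
    rw [if_congr hA rfl rfl, if_congr hB rfl rfl]; simp
end

section
/- Let V be a nonempty finite set, f a monotone nondecreasing submodular function from subsets of V to ℝ, k a positive integer, M ⊆ V, and O ⊆ V with |O| ≤ k. Then there exists v ∈ V such that f(M ∪ {v}) − f(M) ≥ (f(O) − f(M)) / k; equivalently, max_{v ∈ V} (f(M ∪ {v}) − f(M)) ≥ (f(O) − f(M)) / k. -/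
lemma sum_gain_aux {V : Type*} [DecidableEq V]
    (f : Finset V → ℝ)
    (hsub : ∀ A B : Finset V, A ⊆ B → ∀ v : V,
      f (insert v A) - f A ≥ f (insert v B) - f B)
    (M : Finset V) (S : Finset V) :
    f (M ∪ S) - f M ≤ ∑ v ∈ S, (f (insert v M) - f M) := by
  classical
  induction S using Finset.induction_on with
  | empty => simp
  | @insert a S' hS' ih =>
    rw [Finset.sum_insert hS', Finset.union_insert]
    have h := hsub M (M ∪ S') Finset.subset_union_left a
    linarith

/-- For a monotone nondecreasing submodular function `f` on subsets of a
nonempty finite set `V`, any `M ⊆ V` and any `O ⊆ V` with `|O| ≤ k`, some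
single element `v` gives marginal gain at least `(f O − f M) / k`. -/
theorem stmt10 {V : Type*} [Fintype V] [DecidableEq V] [Nonempty V]
    (f : Finset V → ℝ)
    (hmono : ∀ A B : Finset V, A ⊆ B → f A ≤ f B)
    (hsub : ∀ A B : Finset V, A ⊆ B → ∀ v : V,
      f (insert v A) - f A ≥ f (insert v B) - f B)
    (k : ℕ) (hk : 0 < k) (M O : Finset V) (hO : O.card ≤ k) :
    ∃ v : V, f (insert v M) - f M ≥ (f O - f M) / k := by
  have hk' : (0:ℝ) < k := by exact_mod_cast hk
  by_cases hD : f O - f M ≤ 0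
  · obtain ⟨v⟩ := ‹Nonempty V›
    refine ⟨v, le_trans (div_nonpos_of_nonpos_of_nonneg hD hk'.le) ?_⟩
    have := hmono M (insert v M) (Finset.subset_insert v M)
    linarith
  · push_neg at hD
    by_contra hcon
    push_neg at hcon
    have hsum : f O - f M ≤ ∑ v ∈ O, (f (insert v M) - f M) := by
      have h1 := sum_gain_aux f hsub M O
      have h2 := hmono O (M ∪ O) Finset.subset_union_right
      linarith
    have hlt : ∑ v ∈ O, (f (insert v M) - f M) < ∑ v ∈ O, (f O - f M) / k := by
      apply Finset.sum_lt_sum_of_nonempty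
      · rw [Finset.nonempty_iff_ne_empty]
        intro h
        rw [h] at hD
        have := hmono ∅ M (Finset.empty_subset M)
        simp at hD
        linarith
      · intro i _; exact hcon i
    rw [Finset.sum_const, nsmul_eq_mul] at hlt
    have : (O.card : ℝ) * ((f O - f M) / k) ≤ f O - f M := by
      calc (O.card : ℝ) * ((f O - f M) / k) ≤ (k:ℝ) * ((f O - f M) / k) := by
            apply mul_le_mul_of_nonneg_right (by exact_mod_cast hO)
            positivity
        _ = f O - f M := by field_simp
    linarith
end

section
/- Let k be a positive integer, OPT ≥ 0 a real number, and g : ℕ → ℝ a sequence with g(0) = 0 such that for every i < k, g(i+1) − g(i) ≥ (OPT − g(i)) / k. Then g(k) ≥ (1 − (1 − 1/k)^k) · OPT, and consequently g(k) ≥ (1 − 1/e) · OPT. -/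
/-- If `g 0 = 0` and each of the first `k` increments satisfies
`g (i+1) − g i ≥ (OPT − g i) / k`, then `g k ≥ (1 − (1 − 1/k)^k) · OPT`, and
consequently `g k ≥ (1 − 1/e) · OPT`. -/
theorem stmt11 (k : ℕ) (hk : 0 < k) (OPT : ℝ) (hOPT : 0 ≤ OPT)
    (g : ℕ → ℝ) (hg0 : g 0 = 0)
    (hstep : ∀ i < k, g (i + 1) - g i ≥ (OPT - g i) / k) :
    g k ≥ (1 - (1 - 1 / (k : ℝ)) ^ k) * OPT ∧
    g k ≥ (1 - 1 / Real.exp 1) * OPT := by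
  have hk' : (0:ℝ) < k := by exact_mod_cast hk
  have hkk : (0:ℝ) ≤ 1 - 1 / k := by
    rw [sub_nonneg, div_le_one hk']
    exact_mod_cast hk
  have key : ∀ i ≤ k, OPT - g i ≤ (1 - 1 / (k:ℝ)) ^ i * OPT := by
    intro i hi
    induction i with
    | zero => simp [hg0]
    | succ n ih =>
      have hn : n < k := Nat.lt_of_succ_le hi
      have h1 := hstep n hn
      have ih' := ih (le_of_lt hn)
      have : OPT - g (n+1) ≤ (OPT - g n) * (1 - 1 / k) := by
        have := h1
        have hfrac : (OPT - g n) / k = (OPT - g n) * (1 / k) := by ring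
        nlinarith [h1, hfrac]
      calc OPT - g (n+1) ≤ (OPT - g n) * (1 - 1 / k) := this
        _ ≤ (1 - 1 / (k:ℝ)) ^ n * OPT * (1 - 1 / k) :=
            mul_le_mul_of_nonneg_right ih' hkk
        _ = (1 - 1 / (k:ℝ)) ^ (n+1) * OPT := by ring
  have h1 : g k ≥ (1 - (1 - 1 / (k : ℝ)) ^ k) * OPT := by
    have := key k le_rfl
    nlinarith
  refine ⟨h1, ?_⟩
  have hpow : (1 - 1 / (k:ℝ)) ^ k ≤ 1 / Real.exp 1 := by
    have h := Real.one_sub_div_pow_le_exp_neg (n := k) (t := 1) (by exact_mod_cast hk)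
    rw [Real.exp_neg] at h
    simpa using h
  have : (1 - 1 / Real.exp 1) * OPT ≤ (1 - (1 - 1 / (k:ℝ)) ^ k) * OPT := by
    apply mul_le_mul_of_nonneg_right _ hOPT
    linarith
  linarith
end

section
/- Let V be a nonempty finite set, f a monotone nondecreasing submodular function from subsets of V to ℝ with f(∅) = 0, and k a positive integer. Let M_0 = ∅ and, for each i < k, let M_{i+1} = M_i ∪ {v_i} where v_i maximizes f(M_i ∪ {v}) over v ∈ V (i.e., f(M_i ∪ {v_i}) ≥ f(M_i ∪ {v}) for all v ∈ V). Then the greedy solution satisfies f(M_k) ≥ (1 − 1/e) · max{ f(O) : O ⊆ V, |O| ≤ k }. -/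
/-! Submodularity bounds the gap `f O - f M` to an optimal set `O` with `|O| ≤ k` by the sum of
the `|O|` marginal gains of the elements of `O` at `M`, hence by `k` times the greedy gain. So each
greedy step shrinks the gap by a factor `1 - 1/k`, and after `k` steps it is at most
`(1 - 1/k)^k f O ≤ f O / e`. -/

section

variable {α : Type*} [DecidableEq α] {f : Finset α → ℝ}

theorem sub_le_sum_marginal_gain
    (hsub : ∀ A B : Finset α, A ⊆ B → ∀ v : α, f (insert v A) - f A ≥ f (insert v B) - f B)
    (A S : Finset α) : f (A ∪ S) - f A ≤ ∑ v ∈ S, (f (insert v A) - f A) := by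
  induction S using Finset.induction_on with
  | empty => simp
  | @insert w S hw ih =>
    rw [Finset.sum_insert hw, Finset.union_insert]
    linarith [hsub A (A ∪ S) Finset.subset_union_left w]

theorem sub_le_card_mul_greedy_gain (hmono : ∀ A B : Finset α, A ⊆ B → f A ≤ f B)
    (hsub : ∀ A B : Finset α, A ⊆ B → ∀ v : α, f (insert v A) - f A ≥ f (insert v B) - f B)
    {A : Finset α} {v : α} (hv : ∀ w : α, f (insert w A) ≤ f (insert v A)) (O : Finset α) :
    f O - f A ≤ O.card * (f (insert v A) - f A) := by
  calc f O - f A ≤ f (A ∪ O) - f A := by linarith [hmono O (A ∪ O) Finset.subset_union_right]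
    _ ≤ ∑ w ∈ O, (f (insert w A) - f A) := sub_le_sum_marginal_gain hsub A O
    _ ≤ O.card * (f (insert v A) - f A) := by
      simpa using Finset.sum_le_card_nsmul O _ _ fun w _ => sub_le_sub_right (hv w) (f A)

theorem greedy_gap_step (hmono : ∀ A B : Finset α, A ⊆ B → f A ≤ f B)
    (hsub : ∀ A B : Finset α, A ⊆ B → ∀ v : α, f (insert v A) - f A ≥ f (insert v B) - f B)
    {k : ℕ} (hk : 0 < k) {O : Finset α} (hO : O.card ≤ k)
    {A : Finset α} {v : α} (hv : ∀ w : α, f (insert w A) ≤ f (insert v A)) :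
    f O - f (insert v A) ≤ (1 - 1 / k) * (f O - f A) := by
  have hk' : (0 : ℝ) < k := by exact_mod_cast hk
  have hgain : 0 ≤ f (insert v A) - f A :=
    sub_nonneg.2 (hmono A _ (Finset.subset_insert v A))
  have hgap : f O - f A ≤ k * (f (insert v A) - f A) :=
    (sub_le_card_mul_greedy_gain hmono hsub hv O).trans
      (mul_le_mul_of_nonneg_right (by exact_mod_cast hO) hgain)
  have hgap' : (f O - f A) / k ≤ f (insert v A) - f A := by
    rwa [div_le_iff₀ hk', mul_comm]
  calc f O - f (insert v A) ≤ (f O - f A) - (f O - f A) / k := by linarith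
    _ = (1 - 1 / k) * (f O - f A) := by ring

end

theorem stmt12_general {V : Type*} [DecidableEq V]
    (f : Finset V → ℝ)
    (hmono : ∀ A B : Finset V, A ⊆ B → f A ≤ f B)
    (hsub : ∀ A B : Finset V, A ⊆ B → ∀ v : V,
      f (insert v A) - f A ≥ f (insert v B) - f B)
    (hf0 : f ∅ = 0)
    (k : ℕ) (hk : 0 < k)
    (M : ℕ → Finset V) (hM0 : M 0 = ∅)
    (hgreedy : ∀ i < k, ∃ v : V, M (i + 1) = insert v (M i) ∧
      ∀ w : V, f (insert w (M i)) ≤ f (insert v (M i))) :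
    ∀ O : Finset V, O.card ≤ k → f (M k) ≥ (1 - 1 / Real.exp 1) * f O := by
  intro O hO
  have hk' : (1 : ℝ) ≤ k := by exact_mod_cast hk
  have hO_nonneg : 0 ≤ f O := hf0 ▸ hmono ∅ O O.empty_subset
  have hgap : f O - f (M k) ≤ (1 - 1 / k) ^ k * f O := by
    have hratio : (0 : ℝ) ≤ 1 - 1 / k := sub_nonneg.2 (div_le_one_of_le₀ hk' (by positivity))
    simpa [hM0, hf0] using le_geom (u := fun i => f O - f (M i)) hratio k fun i hi => by
      obtain ⟨v, hMv, hv⟩ := hgreedy i hi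
      simpa only [hMv] using greedy_gap_step hmono hsub hk hO hv
  have hexp : (1 - 1 / k : ℝ) ^ k ≤ 1 / Real.exp 1 := by
    simpa [Real.exp_neg] using Real.one_sub_div_pow_le_exp_neg (n := k) hk'
  linarith [mul_le_mul_of_nonneg_right hexp hO_nonneg]

/-- The greedy algorithm, which at each of `k` steps adds a single element
maximizing the value of `f`, gives a `(1 − 1/e)`-approximation for maximizing a
monotone nondecreasing submodular function `f` with `f ∅ = 0` subject to a
cardinality constraint `k`. -/
theorem stmt12 {V : Type*} [Fintype V] [DecidableEq V] [Nonempty V]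
    (f : Finset V → ℝ)
    (hmono : ∀ A B : Finset V, A ⊆ B → f A ≤ f B)
    (hsub : ∀ A B : Finset V, A ⊆ B → ∀ v : V,
      f (insert v A) - f A ≥ f (insert v B) - f B)
    (hf0 : f ∅ = 0)
    (k : ℕ) (hk : 0 < k)
    (M : ℕ → Finset V) (hM0 : M 0 = ∅)
    (hgreedy : ∀ i < k, ∃ v : V, M (i + 1) = insert v (M i) ∧
      ∀ w : V, f (insert w (M i)) ≤ f (insert v (M i))) :
    ∀ O : Finset V, O.card ≤ k → f (M k) ≥ (1 - 1 / Real.exp 1) * f O :=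
  stmt12_general f hmono hsub hf0 k hk M hM0 hgreedy
end

section
/- Let U be a finite set of elements and 𝒮 a finite family of subsets of U. Form the directed graph G on the node set V = U ⊔ 𝒮 (disjoint union) whose live edges are exactly the pairs (s, u) with s ∈ 𝒮, u ∈ U, and u ∈ s. Let m be a positive integer with m ≤ |𝒮|. Then there exists a subfamily C ⊆ 𝒮 with |C| = m and ⋃_{s ∈ C} s = U (a set cover of size m) if and only if there exists a seed set T ⊆ V with |T| = m such that the set of nodes reachable from T via live edges of G has size at least |U| + m. -/
open scoped Classical

/-- Set Cover reduction: there is a set cover of size `m` iff in the bipartite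
graph on `U ⊔ 𝒮` with live edges `(s, u)` for `u ∈ s`, some seed set of size
`m` reaches at least `|U| + m` nodes. -/
theorem stmt14 {U : Type*} [Fintype U] [DecidableEq U]
    (𝒮 : Finset (Finset U)) (m : ℕ) (hm : 0 < m) (hm' : m ≤ 𝒮.card) :
    (∃ C ⊆ 𝒮, C.card = m ∧ ∀ u : U, ∃ s ∈ C, u ∈ s) ↔
      (∃ T : Finset (U ⊕ {s : Finset U // s ∈ 𝒮}), T.card = m ∧
        (Finset.univ.filter (fun w : U ⊕ {s : Finset U // s ∈ 𝒮} =>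
            ∃ v ∈ T, Relation.ReflTransGen
              (fun a b => ∃ (s : {s : Finset U // s ∈ 𝒮}) (u : U),
                a = Sum.inr s ∧ b = Sum.inl u ∧ u ∈ s.val) v w)).card
          ≥ Fintype.card U + m) := by
  set S := {s : Finset U // s ∈ 𝒮} with hS
  set R : (U ⊕ S) → (U ⊕ S) → Prop := fun a b => ∃ (s : S) (u : U),
    a = Sum.inr s ∧ b = Sum.inl u ∧ u ∈ s.val with hRdef
  have key : ∀ v w : U ⊕ S, Relation.ReflTransGen R v w → v = w ∨ R v w := by
    intro v w h
    induction h with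
    | refl => exact Or.inl rfl
    | tail h1 h2 ih =>
      rcases ih with rfl | hvb
      · exact Or.inr h2
      · rcases hvb with ⟨s, u, _, rfl, _⟩
        rcases h2 with ⟨s', u', heq, _, _⟩
        exact absurd heq (by simp)
  constructor
  · rintro ⟨C, hCS, hCcard, hcov⟩
    refine ⟨C.attach.image (fun s => (Sum.inr ⟨s.1, hCS s.2⟩ : U ⊕ S)), ?_, ?_⟩
    · rw [Finset.card_image_of_injective _ (fun a b h => by
        injection h with h'; injection h' with h''; exact Subtype.ext h''), Finset.card_attach]
      exact hCcard
    · set T := C.attach.image (fun s => (Sum.inr ⟨s.1, hCS s.2⟩ : U ⊕ S)) with hT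
      set F := (Finset.univ.filter (fun w : U ⊕ S =>
            ∃ v ∈ T, Relation.ReflTransGen R v w)) with hF
      have hsub : (Finset.univ.image (Sum.inl : U → U ⊕ S)) ∪ T ⊆ F := by
        intro w hw
        rcases Finset.mem_union.1 hw with hw | hw
        · rcases Finset.mem_image.1 hw with ⟨u, _, rfl⟩
          rcases hcov u with ⟨s, hsC, hus⟩
          refine Finset.mem_filter.2 ⟨Finset.mem_univ _,
            Sum.inr ⟨s, hCS hsC⟩, ?_, Relation.ReflTransGen.single
              ⟨⟨s, hCS hsC⟩, u, rfl, rfl, hus⟩⟩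
          exact Finset.mem_image.2 ⟨⟨s, hsC⟩, Finset.mem_attach _ _, rfl⟩
        · exact Finset.mem_filter.2 ⟨Finset.mem_univ _, w, hw, Relation.ReflTransGen.refl⟩
      have hdisj : Disjoint (Finset.univ.image (Sum.inl : U → U ⊕ S)) T := by
        rw [Finset.disjoint_left]
        rintro w hw hw'
        rcases Finset.mem_image.1 hw with ⟨u, _, rfl⟩
        rcases Finset.mem_image.1 hw' with ⟨s, _, h⟩
        exact absurd h (by simp)
      calc Fintype.card U + m
          = (Finset.univ.image (Sum.inl : U → U ⊕ S)).card + T.card := by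
            rw [Finset.card_image_of_injective _ Sum.inl_injective,
              Finset.card_univ,
              Finset.card_image_of_injective _ (fun a b h => by
                injection h with h'; injection h' with h''; exact Subtype.ext h''), Finset.card_attach, hCcard]
        _ = ((Finset.univ.image (Sum.inl : U → U ⊕ S)) ∪ T).card :=
            (Finset.card_union_of_disjoint hdisj).symm
        _ ≤ F.card := Finset.card_le_card hsub
  · rintro ⟨T, hTcard, hF⟩
    set F := (Finset.univ.filter (fun w : U ⊕ S =>
          ∃ v ∈ T, Relation.ReflTransGen R v w)) with hFdef
    set A := (Finset.univ.image (Sum.inl : U → U ⊕ S)) with hAdef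
    have hAcard : A.card = Fintype.card U := by
      rw [hAdef, Finset.card_image_of_injective _ Sum.inl_injective, Finset.card_univ]
    have hsub : F ⊆ A ∪ T := by
      intro w hw
      rcases Finset.mem_filter.1 hw with ⟨-, v, hv, hrt⟩
      rcases key v w hrt with rfl | ⟨s, u, _, rfl, _⟩
      · exact Finset.mem_union_right _ hv
      · exact Finset.mem_union_left _ (Finset.mem_image.2 ⟨u, Finset.mem_univ _, rfl⟩)
    have hucard : (A ∪ T).card ≤ Fintype.card U + m := by
      calc (A ∪ T).card ≤ A.card + T.card := Finset.card_union_le _ _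
        _ = Fintype.card U + m := by rw [hAcard, hTcard]
    have hFeq : F = A ∪ T :=
      Finset.eq_of_subset_of_card_le hsub (le_trans hucard hF)
    have hinter : (A ∩ T).card = 0 := by
      have h1 := Finset.card_union_add_card_inter A T
      have h2 : (A ∪ T).card = Fintype.card U + m :=
        le_antisymm hucard (hFeq ▸ hF)
      have h3 : A.card + T.card = Fintype.card U + m := by rw [hAcard, hTcard]
      omega
    have hTinr : ∀ w ∈ T, ∃ s : S, w = Sum.inr s := by
      intro w hw
      rcases w with u | s
      · exfalso
        have : Sum.inl u ∈ A ∩ T := Finset.mem_inter.2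
          ⟨Finset.mem_image.2 ⟨u, Finset.mem_univ _, rfl⟩, hw⟩
        simp [Finset.card_eq_zero.1 hinter] at this
      · exact ⟨s, rfl⟩
    refine ⟨T.image (Sum.elim (fun _ => (∅ : Finset U)) (fun s => s.val)), ?_, ?_, ?_⟩
    · intro x hx
      rcases Finset.mem_image.1 hx with ⟨w, hw, rfl⟩
      rcases hTinr w hw with ⟨s, rfl⟩
      exact s.2
    · rw [Finset.card_image_of_injOn, hTcard]
      intro a ha b hb hab
      rcases hTinr a ha with ⟨s, rfl⟩
      rcases hTinr b hb with ⟨s', rfl⟩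
      simp only [Sum.elim_inr] at hab
      exact congrArg Sum.inr (Subtype.ext hab)
    · intro u
      have hu : Sum.inl u ∈ F := by
        rw [hFeq]
        exact Finset.mem_union_left _ (Finset.mem_image.2 ⟨u, Finset.mem_univ _, rfl⟩)
      rcases Finset.mem_filter.1 hu with ⟨-, v, hv, hrt⟩
      rcases key v _ hrt with heq | ⟨s, u', hvs, heq, hus⟩
      · exfalso
        rcases hTinr v hv with ⟨s, rfl⟩
        exact absurd heq (by simp)
      · refine ⟨s.val, Finset.mem_image.2 ⟨v, hv, by rw [hvs]; rfl⟩, ?_⟩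
        obtain rfl : u' = u := by simpa using heq.symm
        exact hus
end
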